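/- arXiv:1802.09665 — 2 statements merged into one kernel-verified Lean document; each statement's English description precedes it below -/
import Mathlib

section
/- Every connected graph with independence number at most 2 has a Hamiltonian path. -/
/-- A linear coloring: every path in `G` contains a vertex whose color appears
exactly once on the path. -/
def IsLinearColoring {V C : Type*} [DecidableEq C] (G : SimpleGraph V) (ψ : V → C) : Prop :=
  ∀ ⦃u v : V⦄ (p : G.Walk u v), p.IsPath →
    ∃ w ∈ p.support, (p.support.map ψ).count (ψ w) = 1

/-- A centered coloring: every nonempty vertex set inducing a connected subgraph
contains a vertex whose color appears exactly once in the set. -/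
def IsCenteredColoring {V C : Type*} [DecidableEq C] (G : SimpleGraph V) (φ : V → C) : Prop :=
  ∀ S : Finset V, S.Nonempty → (G.induce (S : Set V)).Connected →
    ∃ w ∈ S, (S.filter (fun x => φ x = φ w)).card = 1

/-- The linear coloring number: minimum number of colors of a linear coloring. -/
noncomputable def chiLin {V : Type*} (G : SimpleGraph V) : ℕ :=
  sInf {k | ∃ ψ : V → Fin k, IsLinearColoring G ψ}

/-- The centered coloring number: minimum number of colors of a centered coloring. -/
noncomputable def chiCen {V : Type*} (G : SimpleGraph V) : ℕ :=
  sInf {k | ∃ φ : V → Fin k, IsCenteredColoring G φ}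

/-- A treedepth decomposition of `G`: a rooted forest on the vertices of `G`,
given by its ancestor relation `anc` (a partial order whose down-sets are chains),
such that every edge of `G` joins an ancestor-descendant pair. -/
structure TreedepthDecomp {V : Type*} (G : SimpleGraph V) where
  anc : V → V → Prop
  refl : ∀ v, anc v v
  antisymm : ∀ u v, anc u v → anc v u → u = v
  trans : ∀ u v w, anc u v → anc v w → anc u w
  chain : ∀ u v w, anc u w → anc v w → anc u v ∨ anc v u
  edge : ∀ u v, G.Adj u v → anc u v ∨ anc v u

/-- The decomposition has depth at most `k`: every ancestor-descendant chain has
at most `k` vertices. -/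
def TreedepthDecomp.depthLE {V : Type*} {G : SimpleGraph V} (d : TreedepthDecomp G)
    (k : ℕ) : Prop :=
  ∀ s : Finset V, (∀ a ∈ s, ∀ b ∈ s, d.anc a b ∨ d.anc b a) → s.card ≤ k

/-- The treedepth of `G`: minimum depth of a treedepth decomposition. -/
noncomputable def treedepth {V : Type*} (G : SimpleGraph V) : ℕ :=
  sInf {k | ∃ d : TreedepthDecomp G, d.depthLE k}

/-!
Take a longest path `p` from `u` to `v` and suppose some vertex is missed; by connectivity some
vertex `y` off `p` is adjacent to a vertex `z` on `p`. If `y` is adjacent to an endpoint, `p`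
extends. Otherwise `{u, v, y}` is not independent, so `u` and `v` are adjacent and `p` closes up
into a cycle through all its vertices; opening this cycle at `z` and prepending `y` gives a longer
path.
-/

namespace SimpleGraph

variable {V : Type*} {G : SimpleGraph V}

theorem Preconnected.exists_adj_of_mem_of_notMem (hG : G.Preconnected) {S : Set V} {a b : V}
    (ha : a ∈ S) (hb : b ∉ S) : ∃ y ∉ S, ∃ z ∈ S, G.Adj y z := by
  obtain ⟨p⟩ := hG b a
  obtain ⟨d, -, hd, hd'⟩ := p.exists_boundary_dart Sᶜ hb (by simpa using ha)
  exact ⟨d.fst, hd, d.snd, by simpa using hd', d.adj⟩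

theorem exists_isPath_forall_length_le [Finite V] [Nonempty V] :
    ∃ (u v : V) (p : G.Walk u v), p.IsPath ∧
      ∀ (u' v' : V) (q : G.Walk u' v'), q.IsPath → q.length ≤ p.length := by
  have := Fintype.ofFinite V
  set N : Set ℕ := {n | ∃ (u v : V) (p : G.Walk u v), p.IsPath ∧ p.length = n}
  have hbdd : BddAbove N := ⟨Fintype.card V, by
    rintro _ ⟨u, v, p, hp, rfl⟩
    exact hp.length_lt.le⟩
  obtain ⟨v₀⟩ := ‹Nonempty V›
  obtain ⟨u, v, p, hp, hlen⟩ := Nat.sSup_mem (s := N) ⟨0, v₀, v₀, .nil, .nil, rfl⟩ hbdd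
  exact ⟨u, v, p, hp, fun u' v' q hq => hlen ▸ le_csSup hbdd ⟨u', v', q, hq, rfl⟩⟩

namespace Walk

theorem two_le_length_of_mem_support {u v z : V} {p : G.Walk u v} (hz : z ∈ p.support)
    (hzu : z ≠ u) (hzv : z ≠ v) : 2 ≤ p.length := by
  obtain ⟨n, rfl, hn⟩ := mem_support_iff_exists_getVert.mp hz
  have h0 : n ≠ 0 := by rintro rfl; exact hzu p.getVert_zero
  have hl : n ≠ p.length := by rintro rfl; exact hzv p.getVert_length
  omega

theorem IsPath.isCycle_cons {u v : V} {p : G.Walk u v} (hp : p.IsPath) (h : G.Adj v u)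
    (hlen : 2 ≤ p.length) : (cons h p).IsCycle :=
  isCycle_iff_isPath_tail_and_le_length.mpr ⟨by simpa using hp, by simp; omega⟩

theorem IsCycle.exists_isPath_of_mem_support [DecidableEq V] {v z : V} {c : G.Walk v v}
    (hc : c.IsCycle) (hz : z ∈ c.support) :
    ∃ (w : V) (q : G.Walk z w), q.IsPath ∧ q.length + 1 = c.length ∧
      ∀ t, t ∈ q.support ↔ t ∈ c.support := by
  have hc' := hc.rotate hz
  rw [← c.length_rotate z hz]
  simp_rw [← c.mem_support_rotate_iff z hz]
  generalize c.rotate z hz = c' at hc'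
  cases c' with
  | nil => exact absurd hc' not_isCycle_nil
  | cons hadj q =>
    refine ⟨_, q.reverse, ((cons_isCycle_iff q hadj).mp hc').1.reverse, by simp, fun t => ?_⟩
    simp only [support_reverse, List.mem_reverse, support_cons, List.mem_cons]
    exact ⟨Or.inr, by rintro (rfl | h); exacts [q.end_mem_support, h]⟩

end Walk

open Walk

variable [DecidableEq V]

theorem IndepSetFree.adj_of_not_adj_of_not_adj (hG : G.IndepSetFree 3) {u v w : V}
    (huv : u ≠ v) (hwu : w ≠ u) (hwv : w ≠ v) (hwu' : ¬G.Adj w u) (hwv' : ¬G.Adj w v) :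
    G.Adj u v := by
  by_contra huv'
  refine (cliqueFree_compl (G := G)).mpr hG {u, v, w} (is3Clique_triple_iff.mpr ?_)
  simp only [compl_adj, G.adj_comm _ w]
  exact ⟨⟨huv, huv'⟩, ⟨hwu.symm, hwu'⟩, ⟨hwv.symm, hwv'⟩⟩

theorem IndepSetFree.exists_isPath_length_eq_succ (hG : G.IndepSetFree 3) {u v y z : V}
    {p : G.Walk u v} (hp : p.IsPath) (hy : y ∉ p.support) (hz : z ∈ p.support) (hyz : G.Adj y z) :
    ∃ (a b : V) (q : G.Walk a b), q.IsPath ∧ q.length = p.length + 1 := by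
  have hyu₀ : y ≠ u := fun h => hy (h ▸ p.start_mem_support)
  have hyv₀ : y ≠ v := fun h => hy (h ▸ p.end_mem_support)
  by_cases hyu : G.Adj y u
  · exact ⟨y, v, cons hyu p, hp.cons hy, rfl⟩
  by_cases hyv : G.Adj y v
  · exact ⟨y, u, cons hyv p.reverse, hp.reverse.cons (by simpa using hy), by simp⟩
  have hlen := two_le_length_of_mem_support hz (by rintro rfl; exact hyu hyz)
    (by rintro rfl; exact hyv hyz)
  have huv : u ≠ v := by rintro rfl; have := length_eq_zero_iff.mpr (hp.nil_iff_eq.mpr rfl); omega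
  have hvu := hG.adj_of_not_adj_of_not_adj huv.symm hyv₀ hyu₀ hyv hyu
  obtain ⟨w, q, hq, hqlen, hqsupp⟩ := (hp.isCycle_cons hvu hlen).exists_isPath_of_mem_support
    (List.mem_cons_of_mem _ hz)
  refine ⟨y, w, cons hyz q, hq.cons ?_, by simpa using hqlen⟩
  simpa [hqsupp, hy] using hyv₀

end SimpleGraph

open SimpleGraph

/-- Every connected graph with independence number at most `2`
has a Hamiltonian path. -/
theorem hamiltonianPath_of_independenceNumber_le_two {V : Type*} [Fintype V] [DecidableEq V]
    (G : SimpleGraph V) (hconn : G.Connected)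
    (hind : ∀ s : Finset V, (∀ a ∈ s, ∀ b ∈ s, a ≠ b → ¬ G.Adj a b) → s.card ≤ 2) :
    ∃ (u v : V) (p : G.Walk u v), p.IsHamiltonian := by
  have hG : G.IndepSetFree 3 := fun s ⟨hs, hcard⟩ => by
    have := hind s fun a ha b hb => hs ha hb
    omega
  have := hconn.nonempty
  obtain ⟨u, v, p, hp, hlongest⟩ := G.exists_isPath_forall_length_le
  refine ⟨u, v, p, hp.isHamiltonian_of_mem fun x => ?_⟩
  by_contra hx
  obtain ⟨y, hy, z, hz, hyz⟩ := hconn.preconnected.exists_adj_of_mem_of_notMem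
    (S := {t | t ∈ p.support}) p.start_mem_support hx
  obtain ⟨a, b, q, hq, hlen⟩ := hG.exists_isPath_length_eq_succ hp hy hz hyz
  have := hlongest a b q hq
  omega
end

section
/- Define graphs R_i recursively: R_0 is the empty graph, and R_i consists of a clique on vertices v_1,...,v_i together with i disjoint copies H_1,...,H_i of R_p where p = floor((i-1)/2), where v_j is additionally adjacent to all vertices of H_j. Then R_i admits a linear coloring with exactly i colors. -/
/-- The (asymmetric) edge relation of the recursive graph family `R_i`,
on vertices encoded as lists: the clique vertex `v_j` is `[j]`, and a vertex `w`
of the `j`-th copy `H_j` of `R_{⌊(i-1)/2⌋}` is encoded as `j :: w`. -/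
def RRel : ℕ → List ℕ → List ℕ → Prop
  | 0 => fun _ _ => False
  | (i + 1) => fun x y =>
      (∃ a b, x = [a] ∧ y = [b] ∧ a ≠ b)
      ∨ (∃ j w, w ≠ [] ∧ x = [j] ∧ y = j :: w)
      ∨ (∃ j w w', RRel (i / 2) w w' ∧ x = j :: w ∧ y = j :: w')
termination_by i => i
decreasing_by exact Nat.lt_succ_of_le (Nat.div_le_self i 2)

/-- The vertex set of `R_i` (as lists): `R_0` is empty, and `R_{i}` consists of
clique vertices `v_1, …, v_i` (encoded `[j]`, `j < i`) together with `i`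
disjoint copies `H_1, …, H_i` of `R_{⌊(i-1)/2⌋}` (the `j`-th copy prefixed by `j`). -/
def RVset : ℕ → Set (List ℕ)
  | 0 => ∅
  | (i + 1) => {x | (∃ j, j < i + 1 ∧ x = [j]) ∨
      ∃ j w, j < i + 1 ∧ w ∈ RVset (i / 2) ∧ x = j :: w}
termination_by i => i
decreasing_by exact Nat.lt_succ_of_le (Nat.div_le_self i 2)

/-- The recursive graph `R_i`: a clique on `v_1, …, v_i`, with `v_j` additionally
adjacent to every vertex of the `j`-th copy of `R_{⌊(i-1)/2⌋}`. -/
def RGraph (i : ℕ) : SimpleGraph (RVset i) :=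
  (SimpleGraph.fromRel (RRel i)).induce (RVset i)

/-!
Color `v_j` with `j` and the copy `H_j` with a linear coloring of `R_p` shifted by `j + 1`
modulo `i`, so that `H_j` uses only the window of colors `j + 1, …, j + p`.
A path inside one copy inherits a uniquely colored vertex from `R_p`, the shift being injective
on `p < i` colors. A path meeting the clique enters a copy `H_j` only through `v_j`; as `v_j`
occurs once on it, every copy it meets contains one of its two ends, so it meets at most two
copies `H_a`, `H_b` and passes through `v_a` and `v_b`. Since `2p < i`, `a` and `b` cannot each
lie in the other's window, so one of `v_a`, `v_b` (any clique vertex, if no copy is met) carries a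
color that occurs nowhere else on the path.
-/

namespace SimpleGraph

variable {α : Type*} {G : SimpleGraph α} {P : α → Prop} {a : α} {L : List α}

theorem mem_of_isChain_of_cut (hcut : ∀ u v, G.Adj u v → P u → ¬P v → v = a)
    (hL : L.IsChain G.Adj) {x y : α} (hx : x ∈ L) (hPx : P x) (hy : y ∈ L) (hPy : ¬P y) :
    a ∈ L := by
  by_contra ha
  have hstep : L.IsChain (fun u v => P u ↔ P v) := hL.imp_of_mem_imp fun u v hu hv huv =>
    ⟨fun hPu => by_contra fun hPv => ha (hcut u v huv hPu hPv ▸ hv),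
      fun hPv => by_contra fun hPu => ha (hcut v u huv.symm hPv hPu ▸ hu)⟩
  have hconst := hstep.induction (fun z => P z ↔ P (L.head (List.ne_nil_of_mem hx))) L
    (fun _ _ huv hu => huv.symm.trans hu) (fun _ => Iff.rfl)
  exact hPy ((hconst y hy).2 ((hconst x hx).1 hPx))

theorem head_or_getLast_of_cut (hcut : ∀ u v, G.Adj u v → P u → ¬P v → v = a) (ha : ¬P a)
    (hL : L.IsChain G.Adj) (hnd : L.Nodup) {x : α} (hx : x ∈ L) (hPx : P x) :
    (∃ y ∈ L.head?, P y) ∨ ∃ y ∈ L.getLast?, P y := by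
  by_contra! h
  obtain ⟨hhead, hlast⟩ := h
  obtain ⟨l₁, l₂, rfl⟩ := List.append_of_mem hx
  have hsplit : l₁ ++ x :: l₂ = (l₁ ++ [x]) ++ l₂ := by simp
  have ha₁ : a ∈ l₁ := by
    obtain ⟨y, hy⟩ : ∃ y, (l₁ ++ [x]).head? = some y := Option.isSome_iff_exists.1 (by simp)
    have hPy : ¬P y := hhead y (by simpa using hy)
    have := mem_of_isChain_of_cut hcut (hsplit ▸ hL).left_of_append (x := x) (by simp) hPx
      (List.mem_of_mem_head? hy) hPy
    simp only [List.mem_append, List.mem_singleton] at this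
    exact this.resolve_right fun hax => ha (hax ▸ hPx)
  have ha₂ : a ∈ l₂ := by
    obtain ⟨y, hy⟩ : ∃ y, (x :: l₂).getLast? = some y := Option.isSome_iff_exists.1 (by simp)
    have hPy : ¬P y := hlast y (by simpa using hy)
    have := mem_of_isChain_of_cut hcut hL.right_of_append (x := x) (by simp) hPx
      (List.mem_of_mem_getLast? hy) hPy
    exact (List.mem_cons.1 this).resolve_left fun hax => ha (hax ▸ hPx)
  exact (List.nodup_append.1 hnd).2.2 a ha₁ a (List.mem_cons_of_mem x ha₂) rfl

end SimpleGraph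

theorem exists_forall_not_rel_of_subset_union {α : Type*} {T : α → α → Prop}
    (hT : ∀ a b, T a b → ¬T b a) {J K A B : Set α} (hJK : J ⊆ K) (hJ : J ⊆ A ∪ B)
    (hA : A.Subsingleton) (hB : B.Subsingleton) (hK : K.Nonempty) :
    ∃ k ∈ K, ∀ j ∈ J, ¬T j k := by
  rcases J.eq_empty_or_nonempty with rfl | ⟨j₀, hj₀⟩
  · obtain ⟨k, hk⟩ := hK
    exact ⟨k, hk, by simp⟩
  by_cases h : ∃ j₁ ∈ J, T j₁ j₀
  · obtain ⟨j₁, hj₁, hT₁⟩ := h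
    refine ⟨j₁, hJK hj₁, fun j hj hTj => ?_⟩
    have hpigeon : j = j₀ ∨ j = j₁ ∨ j₀ = j₁ := by
      rcases hJ hj with h | h <;> rcases hJ hj₀ with h₀ | h₀ <;> rcases hJ hj₁ with h₁ | h₁ <;>
        grind [Set.Subsingleton]
    rcases hpigeon with rfl | rfl | rfl
    · exact hT _ _ hT₁ hTj
    · exact hT _ _ hTj hTj
    · exact hT _ _ hT₁ hT₁
  · push Not at h
    exact ⟨j₀, hJK hj₀, h⟩

theorem List.count_map_eq_one {α β : Type*} [DecidableEq β] {f : α → β} {l : List α} {w : α}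
    (hl : l.Nodup) (hw : w ∈ l) (h : ∀ x ∈ l, f x = f w → x = w) :
    (l.map f).count (f w) = 1 := by
  classical
  rw [List.count_eq_countP, List.countP_map, ← List.count_eq_one_of_mem hl hw,
    List.count_eq_countP]
  refine List.countP_congr fun x hx => ?_
  simp only [Function.comp_apply, beq_iff_eq]
  exact ⟨h x hx, fun hxw => hxw ▸ rfl⟩

theorem Nat.not_modEq_add_self {n a d : ℕ} (hd : 0 < d) (hdn : d < n) : ¬a ≡ a + d [MOD n] := by
  intro h
  have hdvd : n ∣ d :=
    Nat.modEq_zero_iff_dvd.1 (Nat.ModEq.add_left_cancel' a (by simpa using h)).symm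
  exact absurd (Nat.le_of_dvd hd hdvd) (not_le.2 hdn)

def ShiftWindow (n p j k : ℕ) : Prop := ∃ c < p, k ≡ j + 1 + c [MOD n]

theorem shiftWindow_asymm {n p : ℕ} (hp : 2 * p < n) (j k : ℕ) (hjk : ShiftWindow n p j k) :
    ¬ShiftWindow n p k j := by
  obtain ⟨c, hc, hk⟩ := hjk
  rintro ⟨c', hc', hj⟩
  refine Nat.not_modEq_add_self (n := n) (a := j) (d := c + c' + 2) (by omega) (by omega) ?_
  calc j ≡ k + 1 + c' [MOD n] := hj
    _ ≡ j + 1 + c + 1 + c' [MOD n] := (hk.add_right 1).add_right c'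
    _ = j + (c + c' + 2) := by ring

/-- The graph `R_i` on all of `List ℕ`; `RGraph i` is its restriction to `RVset i`. -/
abbrev RListGraph (i : ℕ) : SimpleGraph (List ℕ) := SimpleGraph.fromRel (RRel i)

def InCopy (j : ℕ) (x : List ℕ) : Prop := ∃ w, w ≠ [] ∧ x = j :: w

theorem InCopy.eq {j j' : ℕ} {x : List ℕ} (h : InCopy j x) (h' : InCopy j' x) : j = j' := by
  obtain ⟨w, -, rfl⟩ := h
  obtain ⟨w', -, hw'⟩ := h'
  exact (List.cons.inj hw').1

theorem not_inCopy_singleton (j k : ℕ) : ¬InCopy j [k] := by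
  rintro ⟨w, hw, h⟩
  exact hw (List.cons.inj h).2.symm

theorem RRel.ne_nil {n : ℕ} {x y : List ℕ} (h : RRel n x y) : x ≠ [] ∧ y ≠ [] := by
  cases n with
  | zero => rw [RRel] at h; exact h.elim
  | succ m =>
    rw [RRel] at h
    rcases h with ⟨a, b, rfl, rfl, -⟩ | ⟨j, w, -, rfl, rfl⟩ | ⟨j, w, w', -, rfl, rfl⟩ <;> simp

theorem RListGraph.ne_nil_of_adj {n : ℕ} {x y : List ℕ} (h : (RListGraph n).Adj x y) : y ≠ [] := by
  rcases h.2 with h | h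
  exacts [h.ne_nil.2, h.ne_nil.1]

theorem nil_notMem_RVset (n : ℕ) : [] ∉ RVset n := by
  cases n <;> simp [RVset]

theorem mem_RVset_succ {m : ℕ} {x : List ℕ} :
    x ∈ RVset (m + 1) ↔ (∃ k < m + 1, x = [k]) ∨ ∃ j < m + 1, ∃ w ∈ RVset (m / 2), x = j :: w := by
  rw [RVset]
  simp only [Set.mem_ofPred_eq, exists_and_left]

theorem RListGraph.adj_cons {m j : ℕ} {w y : List ℕ} (hw : w ≠ [])
    (h : (RListGraph (m + 1)).Adj (j :: w) y) :
    y = [j] ∨ ∃ w', (RListGraph (m / 2)).Adj w w' ∧ y = j :: w' := by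
  obtain ⟨hne, hr | hr⟩ := h <;> rw [RRel] at hr
  · rcases hr with ⟨a, b, ha, -, -⟩ | ⟨j', w', -, ha, -⟩ | ⟨j', w₁, w', hr, ha, rfl⟩
    · exact absurd (List.cons.inj ha).2 hw
    · exact absurd (List.cons.inj ha).2 hw
    · obtain ⟨rfl, rfl⟩ := List.cons.inj ha
      exact Or.inr ⟨w', ⟨fun h => hne (h ▸ rfl), Or.inl hr⟩, rfl⟩
  · rcases hr with ⟨a, b, -, hb, -⟩ | ⟨j', w', -, rfl, hb⟩ | ⟨j', w', w₁, hr, rfl, hb⟩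
    · exact absurd (List.cons.inj hb).2 hw
    · exact Or.inl (by rw [(List.cons.inj hb).1])
    · obtain ⟨rfl, rfl⟩ := List.cons.inj hb
      exact Or.inr ⟨w', ⟨fun h => hne (h ▸ rfl), Or.inr hr⟩, rfl⟩

theorem RListGraph.eq_singleton_of_adj_of_inCopy {m : ℕ} (j : ℕ) (u v : List ℕ)
    (huv : (RListGraph (m + 1)).Adj u v) (hu : InCopy j u) (hv : ¬InCopy j v) : v = [j] := by
  obtain ⟨w, hw, rfl⟩ := hu
  refine (RListGraph.adj_cons hw huv).resolve_right ?_
  rintro ⟨w', hww', rfl⟩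
  exact hv ⟨w', RListGraph.ne_nil_of_adj hww', rfl⟩

theorem RListGraph.adj_of_adj_cons {m j : ℕ} {w w' : List ℕ} (hw : w ≠ []) (hw' : w' ≠ [])
    (h : (RListGraph (m + 1)).Adj (j :: w) (j :: w')) : (RListGraph (m / 2)).Adj w w' := by
  rcases RListGraph.adj_cons hw h with h | ⟨w'', hadj, h⟩
  · exact absurd (List.cons.inj h).2 hw'
  · rwa [(List.cons.inj h).2]

/-- The coloring of the construction: `v_j` gets color `j`, and `H_j` the coloring of
`R_{⌊(i-1)/2⌋}` shifted by `j + 1` modulo `i` (colors are `0, …, i - 1` here). -/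
def rColor : ℕ → List ℕ → ℕ
  | 0, _ => 0
  | _ + 1, [] => 0
  | _ + 1, [j] => j
  | m + 1, j :: w => (j + 1 + rColor (m / 2) w) % (m + 1)
termination_by n => n
decreasing_by omega

@[simp]
theorem rColor_succ_singleton (m j : ℕ) : rColor (m + 1) [j] = j := by
  rw [rColor]

theorem rColor_succ_cons {m j : ℕ} {w : List ℕ} (hw : w ≠ []) :
    rColor (m + 1) (j :: w) = (j + 1 + rColor (m / 2) w) % (m + 1) := by
  rw [rColor]
  exact hw

theorem rColor_lt {n : ℕ} {x : List ℕ} (hx : x ∈ RVset n) : rColor n x < n := by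
  cases n with
  | zero => simp [RVset] at hx
  | succ m =>
    rcases mem_RVset_succ.1 hx with ⟨k, hk, rfl⟩ | ⟨j, -, w, hw, rfl⟩
    · simpa using hk
    · rw [rColor_succ_cons (ne_of_mem_of_not_mem hw (nil_notMem_RVset _))]
      exact Nat.mod_lt _ m.succ_pos

/-- `L` lists the vertices of a path of `R_n` in order. -/
structure IsRPath (n : ℕ) (L : List (List ℕ)) : Prop where
  ne_nil : L ≠ []
  nodup : L.Nodup
  mem : ∀ x ∈ L, x ∈ RVset n
  isChain : L.IsChain (RListGraph n).Adj

def HasUniqueColor {α β : Type*} (φ : α → β) (L : List α) : Prop :=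
  ∃ w ∈ L, ∀ x ∈ L, φ x = φ w → x = w

theorem exists_eq_map_cons_of_forall_inCopy {j : ℕ} {L : List (List ℕ)}
    (h : ∀ x ∈ L, InCopy j x) : ∃ L' : List (List ℕ), L = L'.map (j :: ·) ∧ ∀ w ∈ L', w ≠ [] := by
  induction L with
  | nil => exact ⟨[], rfl, by simp⟩
  | cons x L ih =>
    obtain ⟨w, hw, rfl⟩ := h x List.mem_cons_self
    obtain ⟨L', rfl, hL'⟩ := ih fun y hy => h y (List.mem_cons_of_mem _ hy)
    exact ⟨w :: L', rfl, by simpa [hw] using hL'⟩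

theorem IsRPath.of_map_cons {m j : ℕ} {L : List (List ℕ)} (hL : IsRPath (m + 1) (L.map (j :: ·)))
    (hne : ∀ w ∈ L, w ≠ []) : IsRPath (m / 2) L where
  ne_nil := by simpa using hL.ne_nil
  nodup := hL.nodup.of_map _
  mem w hw := by
    rcases mem_RVset_succ.1 (hL.mem _ (List.mem_map_of_mem hw)) with
      ⟨k, -, hk⟩ | ⟨j', -, w', hw', hj⟩
    · exact absurd (List.cons.inj hk).2 (hne w hw)
    · rwa [(List.cons.inj hj).2]
  isChain := ((List.isChain_map _).1 hL.isChain).imp_of_mem_imp fun a b ha hb =>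
    RListGraph.adj_of_adj_cons (hne a ha) (hne b hb)

theorem HasUniqueColor.map_cons {m j : ℕ} {L : List (List ℕ)} (hL : ∀ w ∈ L, w ∈ RVset (m / 2))
    (h : HasUniqueColor (rColor (m / 2)) L) : HasUniqueColor (rColor (m + 1)) (L.map (j :: ·)) := by
  obtain ⟨w, hw, hu⟩ := h
  have hne : ∀ x ∈ L, x ≠ [] := fun x hx => ne_of_mem_of_not_mem (hL x hx) (nil_notMem_RVset _)
  have hlt : ∀ x ∈ L, rColor (m / 2) x < m + 1 := fun x hx => by
    have := rColor_lt (hL x hx); omega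
  refine ⟨j :: w, List.mem_map_of_mem hw, ?_⟩
  simp only [List.mem_map]
  rintro _ ⟨x, hx, rfl⟩ hc
  rw [rColor_succ_cons (hne x hx), rColor_succ_cons (hne w hw)] at hc
  rw [hu x hx ((Nat.ModEq.add_left_cancel' (j + 1) hc).eq_of_lt_of_lt (hlt x hx) (hlt w hw))]

theorem IsRPath.exists_forall_inCopy {m : ℕ} {L : List (List ℕ)} (hL : IsRPath (m + 1) L)
    (hclique : ∀ k, [k] ∉ L) : ∃ j, ∀ x ∈ L, InCopy j x := by
  have hcopy : ∀ x ∈ L, ∃ j, InCopy j x := fun x hx => by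
    rcases mem_RVset_succ.1 (hL.mem x hx) with ⟨k, -, rfl⟩ | ⟨j, -, w, hw, rfl⟩
    · exact absurd hx (hclique k)
    · exact ⟨j, w, ne_of_mem_of_not_mem hw (nil_notMem_RVset _), rfl⟩
  obtain ⟨x₀, hx₀⟩ := List.exists_mem_of_ne_nil _ hL.ne_nil
  obtain ⟨j, hj⟩ := hcopy x₀ hx₀
  refine ⟨j, fun y hy => by_contra fun hny => hclique j ?_⟩
  exact SimpleGraph.mem_of_isChain_of_cut (RListGraph.eq_singleton_of_adj_of_inCopy j)
    hL.isChain hx₀ hj hy hny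

theorem IsRPath.hasUniqueColor_of_singleton_mem {m k : ℕ} {L : List (List ℕ)}
    (hL : IsRPath (m + 1) L) (hk : [k] ∈ L) : HasUniqueColor (rColor (m + 1)) L := by
  let J := {j | ∃ x ∈ L, InCopy j x}
  have hJK : J ⊆ {k | [k] ∈ L} := fun j ⟨x, hx, hjx⟩ =>
    SimpleGraph.mem_of_isChain_of_cut (RListGraph.eq_singleton_of_adj_of_inCopy j)
      hL.isChain hx hjx hk (not_inCopy_singleton j k)
  have hJ : J ⊆ {j | ∃ y ∈ L.head?, InCopy j y} ∪ {j | ∃ y ∈ L.getLast?, InCopy j y} :=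
    fun j ⟨x, hx, hjx⟩ => SimpleGraph.head_or_getLast_of_cut
      (RListGraph.eq_singleton_of_adj_of_inCopy j) (not_inCopy_singleton j j)
      hL.isChain hL.nodup hx hjx
  have hends : ∀ o : Option (List ℕ), {j | ∃ y ∈ o, InCopy j y}.Subsingleton :=
    fun o j ⟨y, hy, hjy⟩ j' ⟨y', hy', hjy'⟩ => hjy.eq (Option.mem_unique hy' hy ▸ hjy')
  obtain ⟨k, hkL, hkJ⟩ := exists_forall_not_rel_of_subset_union
    (shiftWindow_asymm (n := m + 1) (p := m / 2) (by omega)) hJK hJ (hends _) (hends _) ⟨k, hk⟩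
  refine ⟨[k], hkL, fun x hx hc => ?_⟩
  rcases mem_RVset_succ.1 (hL.mem x hx) with ⟨c, -, rfl⟩ | ⟨j, -, w, hw, rfl⟩
  · simp_all
  · have hw' : w ≠ [] := ne_of_mem_of_not_mem hw (nil_notMem_RVset _)
    rw [rColor_succ_cons hw', rColor_succ_singleton] at hc
    exact (hkJ j ⟨_, hx, w, hw', rfl⟩ ⟨rColor (m / 2) w, rColor_lt hw, hc ▸ Nat.mod_modEq _ _⟩).elim

theorem IsRPath.hasUniqueColor {n : ℕ} {L : List (List ℕ)} (hL : IsRPath n L) :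
    HasUniqueColor (rColor n) L := by
  induction n using Nat.strong_induction_on generalizing L with
  | _ n ih =>
  cases n with
  | zero =>
    obtain ⟨x, hx⟩ := List.exists_mem_of_ne_nil _ hL.ne_nil
    simpa [RVset] using hL.mem x hx
  | succ m =>
    by_cases hclique : ∃ k, [k] ∈ L
    · obtain ⟨k, hk⟩ := hclique
      exact hL.hasUniqueColor_of_singleton_mem hk
    · obtain ⟨j, hj⟩ := hL.exists_forall_inCopy (not_exists.1 hclique)
      obtain ⟨L', rfl, hne⟩ := exists_eq_map_cons_of_forall_inCopy hj
      have hL' := hL.of_map_cons hne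
      exact (ih _ (by omega) hL').map_cons hL'.mem

theorem IsRPath.of_isPath {i : ℕ} {u v : RVset i} {p : (RGraph i).Walk u v} (hp : p.IsPath) :
    IsRPath i (p.support.map Subtype.val) where
  ne_nil := List.map_eq_nil_iff.not.2 p.support_ne_nil
  nodup := hp.support_nodup.map Subtype.val_injective
  mem x hx := by
    obtain ⟨y, -, rfl⟩ := List.mem_map.1 hx
    exact y.2
  isChain := (List.isChain_map _).2 p.isChain_adj_support

/-- `R_i` admits a linear coloring with exactly `i` colors. -/
theorem rGraph_linearColoring_exact (i : ℕ) :
    ∃ ψ : (RVset i) → Fin i, Function.Surjective ψ ∧ IsLinearColoring (RGraph i) ψ := by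
  let ψ : RVset i → Fin i := fun x => ⟨rColor i x, rColor_lt x.2⟩
  refine ⟨ψ, ?_, fun u v p hp => ?_⟩
  · rintro ⟨c, hc⟩
    obtain ⟨m, rfl⟩ : ∃ m, i = m + 1 := ⟨i - 1, by omega⟩
    exact ⟨⟨[c], mem_RVset_succ.2 (Or.inl ⟨c, hc, rfl⟩)⟩, Fin.ext (rColor_succ_singleton m c)⟩
  · obtain ⟨_, hw, hu⟩ := (IsRPath.of_isPath hp).hasUniqueColor
    obtain ⟨w, hwp, rfl⟩ := List.mem_map.1 hw
    refine ⟨w, hwp, List.count_map_eq_one (f := ψ) hp.support_nodup hwp fun x hx hxw => ?_⟩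
    exact Subtype.ext (hu x (List.mem_map_of_mem hx) (Fin.ext_iff.1 hxw))
end
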